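/- Let n ≥ 1 and let b, b' be units of W. (i) Every g ∈ W[[u]] satisfying b·g ≡ b'·φ(g) (mod p^n) is congruent mod p^n to its constant coefficient g₀, and b·g₀ ≡ b'·F(g₀) (mod p^n). (ii) Consequently, there exists g ∈ W[[u]] with unit constant coefficient satisfying b·g ≡ b'·φ(g) (mod p^n) if and only if there exists a unit w of W with b·w ≡ b'·F(w) (mod p^n). -/

import Mathlib

open PowerSeries

/-- The Frobenius-semilinear map `φ` on `W(k)[[u]]`, sending `Σ wᵢ uⁱ` to `Σ F(wᵢ) u^{p·i}`,
where `F = WittVector.frobenius` is the Witt-vector Frobenius. -/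
noncomputable def phiPS (p : ℕ) [Fact p.Prime] {k : Type*} [CommRing k]
    (g : PowerSeries (WittVector p k)) : PowerSeries (WittVector p k) :=
  PowerSeries.mk fun j =>
    if p ∣ j then WittVector.frobenius (PowerSeries.coeff (R := WittVector p k) (j / p) g) else 0

/-! `φ(g)` has no coefficients outside degrees divisible by `p`, and `j / p < j` for
`j ≠ 0`. So in the coefficient of `uʲ` of `b·g - b'·φ(g)` the term `b'·F(g_{j/p})` is either
absent or, by strong induction, already divisible by `pⁿ`; as `b` is a unit, `pⁿ ∣ g_j` for
all `j ≠ 0`. Conversely a unit solution `w ∈ W` gives the constant solution `g = w`, since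
`φ(C w) = C (F w)`. -/

theorem Nat.div_ne_zero_of_dvd {p j : ℕ} (hp : 0 < p) (h : p ∣ j) (hj : j ≠ 0) :
    j / p ≠ 0 :=
  (Nat.div_pos (Nat.le_of_dvd (Nat.pos_of_ne_zero hj) h) hp).ne'

theorem PowerSeries.dvd_coeff_C_of_dvd {R : Type*} [Semiring R] {d x : R} (h : d ∣ x) (j : ℕ) :
    d ∣ coeff j (C x) := by
  rw [coeff_C]
  split_ifs
  exacts [h, dvd_zero d]

section

variable {p : ℕ} [Fact p.Prime] {k : Type*} [CommRing k]

theorem coeff_phiPS (g : PowerSeries (WittVector p k)) (j : ℕ) :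
    coeff j (phiPS p g) = if p ∣ j then WittVector.frobenius (coeff (j / p) g) else 0 :=
  coeff_mk _ _

theorem phiPS_C (w : WittVector p k) : phiPS p (C w) = C (WittVector.frobenius w) := by
  ext1 j
  rw [coeff_phiPS, coeff_C, coeff_C]
  rcases eq_or_ne j 0 with rfl | hj
  · simp only [dvd_zero, if_true, Nat.zero_div]
  · have hjp : p ∣ j → j / p ≠ 0 := fun h =>
      Nat.div_ne_zero_of_dvd (Fact.out : p.Prime).pos h hj
    split_ifs <;> simp_all

theorem coeff_C_mul_sub_C_mul_phiPS (b b' : WittVector p k) (g : PowerSeries (WittVector p k))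
    (j : ℕ) :
    coeff j (C b * g - C b' * phiPS p g) =
      b * coeff j g - b' * if p ∣ j then WittVector.frobenius (coeff (j / p) g) else 0 := by
  rw [map_sub, coeff_C_mul, coeff_C_mul, coeff_phiPS]

theorem constantCoeff_C_mul_sub_C_mul_phiPS (b b' : WittVector p k)
    (g : PowerSeries (WittVector p k)) :
    constantCoeff (C b * g - C b' * phiPS p g) =
      b * constantCoeff g - b' * WittVector.frobenius (constantCoeff g) := by
  simp only [← coeff_zero_eq_constantCoeff_apply, coeff_C_mul_sub_C_mul_phiPS, dvd_zero,
    if_true, Nat.zero_div]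

theorem pow_dvd_constantCoeff_of_pow_dvd_coeff_C_mul_sub_C_mul_phiPS {n : ℕ}
    {b b' : WittVector p k} {g : PowerSeries (WittVector p k)}
    (hg : ∀ j, (p : WittVector p k) ^ n ∣ coeff j (C b * g - C b' * phiPS p g)) :
    (p : WittVector p k) ^ n ∣
      b * constantCoeff g - b' * WittVector.frobenius (constantCoeff g) := by
  simpa only [coeff_zero_eq_constantCoeff_apply, constantCoeff_C_mul_sub_C_mul_phiPS] using hg 0

theorem pow_dvd_frobenius_of_pow_dvd {n : ℕ} {x : WittVector p k}
    (h : (p : WittVector p k) ^ n ∣ x) :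
    (p : WittVector p k) ^ n ∣ WittVector.frobenius x := by
  simpa only [map_pow, map_natCast] using map_dvd WittVector.frobenius h

theorem pow_dvd_coeff_of_pow_dvd_coeff_C_mul_sub_C_mul_phiPS {n : ℕ} {b b' : WittVector p k}
    (hb : IsUnit b) {g : PowerSeries (WittVector p k)}
    (hg : ∀ j, (p : WittVector p k) ^ n ∣ coeff j (C b * g - C b' * phiPS p g)) :
    ∀ j, j ≠ 0 → (p : WittVector p k) ^ n ∣ coeff j g := by
  intro j
  induction j using Nat.strong_induction_on with
  | _ j ih =>
    intro hj
    have hφ : (p : WittVector p k) ^ n ∣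
        if p ∣ j then WittVector.frobenius (coeff (j / p) g) else 0 := by
      split_ifs with hpj
      · exact pow_dvd_frobenius_of_pow_dvd (ih _
          (Nat.div_lt_self (Nat.pos_of_ne_zero hj) (Fact.out : p.Prime).one_lt)
          (Nat.div_ne_zero_of_dvd (Fact.out : p.Prime).pos hpj hj))
      · exact dvd_zero _
    have hbg : (p : WittVector p k) ^ n ∣ b * coeff j g := by
      simpa only [coeff_C_mul_sub_C_mul_phiPS, sub_add_cancel] using
        dvd_add (hg j) (hφ.mul_left b')
    exact hb.dvd_mul_left.mp hbg

theorem C_mul_C_sub_C_mul_phiPS_C (b b' w : WittVector p k) :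
    C b * C w - C b' * phiPS p (C w) = C (b * w - b' * WittVector.frobenius w) := by
  rw [phiPS_C, map_sub, map_mul, map_mul]

end

theorem mult_type_cyclic_BK_iso_criterion_general
    (p n : ℕ) [Fact p.Prime]
    (k : Type*) [Field k]
    (b b' : WittVector p k) (hb : IsUnit b) :
    ((∀ g : PowerSeries (WittVector p k),
      (∀ j : ℕ, (p : WittVector p k) ^ n ∣
          coeff (R := WittVector p k) j (C (R := WittVector p k) b * g - C (R := WittVector p k) b' * phiPS p g)) →
        ((∀ j : ℕ, j ≠ 0 → (p : WittVector p k) ^ n ∣ coeff (R := WittVector p k) j g) ∧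
          (p : WittVector p k) ^ n ∣
            (b * constantCoeff (R := WittVector p k) g -
              b' * WittVector.frobenius (constantCoeff (R := WittVector p k) g))))) ∧
    ((∃ g : PowerSeries (WittVector p k),
        IsUnit (constantCoeff (R := WittVector p k) g) ∧
        ∀ j : ℕ, (p : WittVector p k) ^ n ∣
          coeff (R := WittVector p k) j (C (R := WittVector p k) b * g - C (R := WittVector p k) b' * phiPS p g)) ↔
      (∃ w : WittVector p k, IsUnit w ∧
        (p : WittVector p k) ^ n ∣ (b * w - b' * WittVector.frobenius w))) := by
  refine ⟨fun g hg => ⟨pow_dvd_coeff_of_pow_dvd_coeff_C_mul_sub_C_mul_phiPS hb hg,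
    pow_dvd_constantCoeff_of_pow_dvd_coeff_C_mul_sub_C_mul_phiPS hg⟩, ?_, ?_⟩
  · rintro ⟨g, hg_unit, hg⟩
    exact ⟨constantCoeff g, hg_unit,
      pow_dvd_constantCoeff_of_pow_dvd_coeff_C_mul_sub_C_mul_phiPS hg⟩
  · rintro ⟨w, hw, hd⟩
    refine ⟨C w, by rwa [constantCoeff_C], fun j => ?_⟩
    rw [C_mul_C_sub_C_mul_phiPS_C]
    exact dvd_coeff_C_of_dvd hd j

/-- **Isomorphism criterion for multiplicative-type cyclic Breuil–Kisin modules.**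
Let `W = W(k)` for `k` a perfect field of characteristic `p`, `n ≥ 1`, and `b, b' ∈ W^×`.
(i) Every `g ∈ W[[u]]` with `b·g ≡ b'·φ(g) (mod pⁿ)` (coefficientwise) is congruent
mod `pⁿ` to its constant coefficient `g₀` (all coefficients in nonzero degree are divisible
by `pⁿ`), and `b·g₀ ≡ b'·F(g₀) (mod pⁿ)` in `W`.
(ii) Consequently such a `g` with unit constant coefficient exists iff there is a unit
`w ∈ W^×` with `b·w ≡ b'·F(w) (mod pⁿ)`. -/
theorem mult_type_cyclic_BK_iso_criterion
    (p n : ℕ) [Fact p.Prime] (hn : 1 ≤ n)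
    (k : Type*) [Field k] [CharP k p] [PerfectRing k p]
    (b b' : WittVector p k) (hb : IsUnit b) (hb' : IsUnit b') :
    ((∀ g : PowerSeries (WittVector p k),
      (∀ j : ℕ, (p : WittVector p k) ^ n ∣
          coeff (R := WittVector p k) j (C (R := WittVector p k) b * g - C (R := WittVector p k) b' * phiPS p g)) →
        ((∀ j : ℕ, j ≠ 0 → (p : WittVector p k) ^ n ∣ coeff (R := WittVector p k) j g) ∧
          (p : WittVector p k) ^ n ∣
            (b * constantCoeff (R := WittVector p k) g -
              b' * WittVector.frobenius (constantCoeff (R := WittVector p k) g))))) ∧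
    ((∃ g : PowerSeries (WittVector p k),
        IsUnit (constantCoeff (R := WittVector p k) g) ∧
        ∀ j : ℕ, (p : WittVector p k) ^ n ∣
          coeff (R := WittVector p k) j (C (R := WittVector p k) b * g - C (R := WittVector p k) b' * phiPS p g)) ↔
      (∃ w : WittVector p k, IsUnit w ∧
        (p : WittVector p k) ^ n ∣ (b * w - b' * WittVector.frobenius w))) :=
  mult_type_cyclic_BK_iso_criterion_general p n k b b' hb
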